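/- arXiv:2505.11363 — 2 statements merged into one kernel-verified Lean document; each statement's English description precedes it below -/
import Mathlib

section
/- There exists a constant $C > 0$ such that for every real $t \ge 2$, every real $k$ with $1 \le k \le t - 1$, and every real $x$ with $1 \le x < t$, one has $e^{-\frac{x^2 (t-k)}{2 k t}} \int_0^{\infty} (y + 1)\, e^{\sqrt{2}\, y + \frac{x y}{k} - \frac{y^2}{2k} - \frac{y^2}{2}}\, dy \le C$. -/
open MeasureTheory Real

private lemma aux_poly (t k x c : ℝ) (ht : 2 ≤ t) (hk : 1 ≤ k) (hkt1 : k + 1 ≤ t)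
    (hx : 1 ≤ x) (hxt : x < t) (hcl : 2 ≤ c) (hcu : c ≤ 5/2) (hcsq : c^2 ≤ 13/2) :
    (c*k + x)^2 * t - x^2*(t-k)*(k+1) ≤ 30 * (k*(k+1)*t) := by
  have hk0 : (0:ℝ) < k := by linarith
  have ht0 : (0:ℝ) < t := by linarith
  have hkt' : 0 ≤ k * t := by positivity
  have hk2t : 0 ≤ k^2 * t := by positivity
  have hexp : (c*k + x)^2 * t - x^2*(t-k)*(k+1)
      = c^2*k^2*t + 2*(c*(k*(t*x))) + x^2*k^2 + x^2*k - x^2*(k*t) := by ring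
  rw [hexp]
  rcases le_or_gt t (2*(k+1)) with hcase | hcase
  · have h1 : 0 ≤ k * x^2 * (t - (k+1)) :=
      mul_nonneg (mul_nonneg hk0.le (sq_nonneg x)) (by linarith)
    have h2 : 0 ≤ k * t * (5/2 - c) * x :=
      mul_nonneg (mul_nonneg (mul_nonneg hk0.le ht0.le) (by linarith)) (by linarith)
    have h3 : 0 ≤ k * t * (2*(k+1) - x) :=
      mul_nonneg (mul_nonneg hk0.le ht0.le) (by linarith)
    have h4 : 0 ≤ k^2 * t * (13/2 - c^2) := mul_nonneg hk2t (by linarith)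
    nlinarith [h1, h2, h3, h4]
  · have g1 : 0 ≤ k * t * (x - 2*c)^2 :=
      mul_nonneg (mul_nonneg hk0.le ht0.le) (sq_nonneg _)
    have g2 : 0 ≤ k * x^2 * (t - 2*(k+1)) :=
      mul_nonneg (mul_nonneg hk0.le (sq_nonneg x)) (by linarith)
    have g3 : 0 ≤ k^2 * t * (13/2 - c^2) := mul_nonneg hk2t (by linarith)
    have g4 : 0 ≤ k * t * (13/2 - c^2) := mul_nonneg hkt' (by linarith)
    nlinarith [g1, g2, g3, g4]

private lemma aux_AD (t k x c : ℝ) (ht : 2 ≤ t) (hk : 1 ≤ k) (hkt1 : k + 1 ≤ t)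
    (hx : 1 ≤ x) (hxt : x < t) (hcl : 2 ≤ c) (hcu : c ≤ 5/2) (hcsq : c^2 ≤ 13/2) :
    (c*k + x)^2/(2*k*(k+1)) + (-(x ^ 2 * (t - k)) / (2 * k * t)) ≤ 15 := by
  have hk0 : (0:ℝ) < k := by linarith
  have hk1 : (0:ℝ) < k + 1 := by linarith
  have ht0 : (0:ℝ) < t := by linarith
  have hrw : (c*k + x)^2/(2*k*(k+1)) + (-(x ^ 2 * (t - k)) / (2 * k * t))
      = ((c*k + x)^2 * t - x^2*(t-k)*(k+1)) / (2*k*(k+1)*t) := by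
    field_simp
    ring
  rw [hrw, div_le_iff₀ (by positivity)]
  have := aux_poly t k x c ht hk hkt1 hx hxt hcl hcu hcsq
  nlinarith [this]

private lemma aux_ident (k x c y : ℝ) (hk0 : 0 < k) :
    y + ((c-1) * y + x * y / k - y ^ 2 / (2 * k) - y ^ 2 / 2)
      = (c*k + x)^2/(2*k*(k+1)) + -((y - (c*k + x)/(k+1))^2/2)
        - (y - (c*k + x)/(k+1))^2/(2*k) := by
  have hk1 : (0:ℝ) < k + 1 := by linarith
  field_simp
  ring

theorem stmt_6 :
    ∃ C : ℝ, 0 < C ∧ ∀ t k x : ℝ, 2 ≤ t → 1 ≤ k → k ≤ t - 1 → 1 ≤ x → x < t →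
      Real.exp (-(x ^ 2 * (t - k)) / (2 * k * t)) *
        ∫ y in Set.Ioi (0 : ℝ),
          (y + 1) * Real.exp (Real.sqrt 2 * y + x * y / k - y ^ 2 / (2 * k) - y ^ 2 / 2) ≤ C := by
  refine ⟨3 * Real.exp 15, by positivity, ?_⟩
  intro t k x ht hk hkt hx hxt
  have hk0 : (0:ℝ) < k := by linarith
  have hk1 : (0:ℝ) < k + 1 := by linarith
  have ht0 : (0:ℝ) < t := by linarith
  have hkt1 : k + 1 ≤ t := by linarith
  have hs2 : Real.sqrt 2 ^ 2 = 2 := Real.sq_sqrt (by norm_num)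
  have hs2a : 1 ≤ Real.sqrt 2 := by nlinarith [Real.sqrt_nonneg 2]
  have hs2b : Real.sqrt 2 ≤ 3/2 := by nlinarith [Real.sqrt_nonneg 2]
  set c : ℝ := Real.sqrt 2 + 1 with hc
  have hcl : 2 ≤ c := by rw [hc]; linarith
  have hcu : c ≤ 5/2 := by rw [hc]; linarith
  have hcsq : c^2 ≤ 13/2 := by rw [hc]; nlinarith
  set m : ℝ := (c*k + x)/(k+1) with hm
  set A : ℝ := (c*k + x)^2/(2*k*(k+1)) with hA
  -- pointwise bound on (0,∞)
  have hpt : ∀ y : ℝ, y ∈ Set.Ioi (0:ℝ) →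
      (y + 1) * Real.exp (Real.sqrt 2 * y + x * y / k - y ^ 2 / (2 * k) - y ^ 2 / 2)
        ≤ Real.exp A * Real.exp (-((y - m)^2/2)) := by
    intro y hy
    have h1 : y + 1 ≤ Real.exp y := by linarith [Real.add_one_le_exp y]
    have h2 : (y + 1) * Real.exp (Real.sqrt 2 * y + x * y / k - y ^ 2 / (2 * k) - y ^ 2 / 2)
        ≤ Real.exp y * Real.exp (Real.sqrt 2 * y + x * y / k - y ^ 2 / (2 * k) - y ^ 2 / 2) :=
      mul_le_mul_of_nonneg_right h1 (Real.exp_nonneg _)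
    rw [← Real.exp_add] at h2
    refine h2.trans ?_
    rw [← Real.exp_add]
    apply Real.exp_le_exp.2
    have hident := aux_ident k x c y hk0
    have hcc : c - 1 = Real.sqrt 2 := by rw [hc]; ring
    rw [hcc] at hident
    rw [hm, hA, hident]
    have hnn : 0 ≤ (y - (c*k + x)/(k+1))^2/(2*k) := by positivity
    linarith [hnn]
  -- Gaussian facts
  have heq : (fun y : ℝ => Real.exp (-((y - m)^2/2)))
      = fun y : ℝ => Real.exp (-(1/2 : ℝ) * (y - m)^2) := by
    funext y; congr 1; ring
  have hgauss : Integrable (fun y : ℝ => Real.exp (-((y - m)^2/2))) := by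
    rw [heq]
    exact (integrable_exp_neg_mul_sq (by norm_num : (0:ℝ) < 1/2)).comp_sub_right m
  have hint : ∫ y : ℝ, Real.exp (-((y - m)^2/2)) = Real.sqrt (2*π) := by
    rw [heq]
    rw [integral_sub_right_eq_self (fun y => Real.exp (-(1/2:ℝ) * y^2)) m]
    rw [integral_gaussian]
    rw [div_div_eq_mul_div, div_one, mul_comm]
  have hsq3 : Real.sqrt (2*π) ≤ 3 := by
    rw [show (3:ℝ) = Real.sqrt 9 by
      rw [show (9:ℝ) = 3^2 by norm_num, Real.sqrt_sq (by norm_num : (0:ℝ) ≤ 3)]]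
    exact Real.sqrt_le_sqrt (by nlinarith [Real.pi_le_four])
  have hgi : Integrable (fun y : ℝ => Real.exp A * Real.exp (-((y - m)^2/2))) :=
    hgauss.const_mul _
  -- integral bound
  have hIle : (∫ y in Set.Ioi (0:ℝ),
      (y + 1) * Real.exp (Real.sqrt 2 * y + x * y / k - y ^ 2 / (2 * k) - y ^ 2 / 2))
      ≤ Real.exp A * 3 := by
    have step1 : (∫ y in Set.Ioi (0:ℝ),
        (y + 1) * Real.exp (Real.sqrt 2 * y + x * y / k - y ^ 2 / (2 * k) - y ^ 2 / 2))
        ≤ ∫ y in Set.Ioi (0:ℝ), Real.exp A * Real.exp (-((y - m)^2/2)) := by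
      apply integral_mono_of_nonneg
      · filter_upwards [ae_restrict_mem measurableSet_Ioi] with y hy
        have hy0 : (0:ℝ) < y := hy
        exact mul_nonneg (by linarith) (Real.exp_nonneg _)
      · exact hgi.integrableOn
      · filter_upwards [ae_restrict_mem measurableSet_Ioi] with y hy
        exact hpt y hy
    have step2 : (∫ y in Set.Ioi (0:ℝ), Real.exp A * Real.exp (-((y - m)^2/2)))
        ≤ ∫ y : ℝ, Real.exp A * Real.exp (-((y - m)^2/2)) :=
      setIntegral_le_integral hgi (ae_of_all _ fun y => by positivity)
    have step3 : (∫ y : ℝ, Real.exp A * Real.exp (-((y - m)^2/2)))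
        = Real.exp A * Real.sqrt (2*π) := by
      rw [integral_const_mul, hint]
    refine step1.trans (step2.trans ?_)
    rw [step3]
    exact mul_le_mul_of_nonneg_left hsq3 (Real.exp_nonneg _)
  have hAD : A + (-(x ^ 2 * (t - k)) / (2 * k * t)) ≤ 15 := by
    rw [hA]
    exact aux_AD t k x c ht hk hkt1 hx hxt hcl hcu hcsq
  calc Real.exp (-(x ^ 2 * (t - k)) / (2 * k * t)) *
        ∫ y in Set.Ioi (0:ℝ),
          (y + 1) * Real.exp (Real.sqrt 2 * y + x * y / k - y ^ 2 / (2 * k) - y ^ 2 / 2)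
      ≤ Real.exp (-(x ^ 2 * (t - k)) / (2 * k * t)) * (Real.exp A * 3) :=
        mul_le_mul_of_nonneg_left hIle (Real.exp_nonneg _)
    _ = 3 * Real.exp (A + (-(x ^ 2 * (t - k)) / (2 * k * t))) := by
        rw [Real.exp_add]; ring
    _ ≤ 3 * Real.exp 15 := by
        have h := Real.exp_le_exp.2 hAD
        linarith
end

section
/- There exists a constant $C > 0$ such that for every real $t \ge 2$, every real $k$ with $1 \le k \le t - 1$, and every real $x$ with $1 \le x < t$, one has $e^{-\frac{x^2 (t-k)}{2 k t}} \int_0^{\infty} y\, e^{\frac{x y}{k} - \frac{y^2}{2k}} \left( \int_y^{\infty} e^{\sqrt{2}\, z - z^2/2}\, dz \right) dy \le C$. -/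
open MeasureTheory Real Set

/-- exponential integral on a ray -/
lemma exp_integral_Ioi' {a : ℝ} (ha : 0 < a) (y : ℝ) :
    ∫ z in Ioi y, Real.exp (-a * z) = Real.exp (-a * y) / a := by
  have h := integral_comp_mul_left_Ioi (fun u => Real.exp (-u)) y ha
  simp only [smul_eq_mul] at h
  have h2 : (∫ z in Ioi y, Real.exp (-(a * z))) = a⁻¹ * ∫ x in Ioi (a*y), Real.exp (-x) := h
  rw [show (fun z => Real.exp (-a*z)) = (fun z => Real.exp (-(a*z))) by funext z; ring_nf]
  rw [h2, integral_exp_neg_Ioi]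
  rw [neg_mul]
  ring

lemma gauss_integrable (m : ℝ) : Integrable (fun y : ℝ => Real.exp (-(y - m)^2/2)) := by
  have h := (integrable_exp_neg_mul_sq (by norm_num : (0:ℝ) < 1/2)).comp_sub_right m
  have he : (fun y : ℝ => Real.exp (-(y - m)^2/2)) = fun y => Real.exp (-(1/2) * (y-m)^2) := by
    funext y; congr 1; ring
  rw [he]; exact h

lemma gauss_integral_le (m : ℝ) : (∫ y : ℝ, Real.exp (-(y - m)^2/2)) ≤ 3 := by
  have he : (fun y : ℝ => Real.exp (-(y - m)^2/2))
      = fun y => (fun u : ℝ => Real.exp (-(1/2) * u^2)) (y - m) := by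
    funext y; simp only; congr 1; ring
  rw [he, integral_sub_right_eq_self (fun u : ℝ => Real.exp (-(1/2) * u^2)) m,
    integral_gaussian (1/2)]
  calc Real.sqrt (π / (1/2)) ≤ Real.sqrt 9 := by
        apply Real.sqrt_le_sqrt; nlinarith [Real.pi_le_four]
    _ = 3 := by
        rw [show (9:ℝ) = 3^2 by norm_num, Real.sqrt_sq (by norm_num : (0:ℝ) ≤ 3)]

lemma gauss_tail_le (y c : ℝ) : (∫ z in Ioi y, Real.exp (-(z - c)^2/2)) ≤ 3 :=
  le_trans (setIntegral_le_integral (gauss_integrable c)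
    (Filter.Eventually.of_forall fun z => Real.exp_nonneg _)) (gauss_integral_le c)

lemma gauss_tail_nonneg (y c : ℝ) : 0 ≤ ∫ z in Ioi y, Real.exp (-(z - c)^2/2) :=
  setIntegral_nonneg measurableSet_Ioi fun z _ => Real.exp_nonneg _

lemma gauss_tail_decay {y c : ℝ} (h : c + 1 ≤ y) :
    (∫ z in Ioi y, Real.exp (-(z - c)^2/2)) ≤ Real.exp (-(y - c)^2/2) / (y - c) := by
  set a := y - c with ha_def
  have ha : 1 ≤ a := by simp only [ha_def]; linarith
  have ha0 : 0 < a := by linarith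
  calc (∫ z in Ioi y, Real.exp (-(z - c)^2/2))
      ≤ ∫ z in Ioi y, Real.exp (-a^2/2 + a*y) * Real.exp (-a*z) := by
        apply integral_mono_of_nonneg
        · exact Filter.Eventually.of_forall fun z => Real.exp_nonneg _
        · exact ((exp_neg_integrableOn_Ioi y ha0).const_mul _)
        · filter_upwards [self_mem_ae_restrict (measurableSet_Ioi : MeasurableSet (Ioi y))]
            with z hz
          rw [← Real.exp_add, Real.exp_le_exp]
          have hzy : y < z := hz
          nlinarith [sq_nonneg (z - y)]
    _ = Real.exp (-a^2/2 + a*y) * (Real.exp (-a*y) / a) := by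
        rw [integral_const_mul, exp_integral_Ioi' ha0]
    _ = Real.exp (-a^2/2) / a := by
        rw [mul_div_assoc', ← Real.exp_add]; congr 2; ring
    _ = Real.exp (-(y - c)^2/2) / (y - c) := by rw [← ha_def]

/-- rewrite the inner integral -/
lemma inner_eq (y : ℝ) :
    (∫ z in Ioi y, Real.exp (Real.sqrt 2 * z - z ^ 2 / 2))
      = Real.exp 1 * ∫ z in Ioi y, Real.exp (-(z - Real.sqrt 2)^2/2) := by
  have hs2 : Real.sqrt 2 ^ 2 = 2 := Real.sq_sqrt (by norm_num)
  have h : ∀ z : ℝ, Real.exp (Real.sqrt 2 * z - z ^ 2 / 2)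
      = Real.exp 1 * Real.exp (-(z - Real.sqrt 2)^2/2) := by
    intro z
    rw [← Real.exp_add]; congr 1; linear_combination hs2 / 2
  simp only [h]
  rw [integral_const_mul]

noncomputable def K0 : ℝ := 3 * (1 + Real.sqrt 2) * Real.exp 1 * Real.exp 1

/-- key bound: y * inner ≤ K0 * gaussian -/
lemma key_bound {y : ℝ} (hy : 0 < y) :
    y * (∫ z in Ioi y, Real.exp (Real.sqrt 2 * z - z ^ 2 / 2))
      ≤ K0 * Real.exp (-(y - Real.sqrt 2)^2/2) := by
  set s := Real.sqrt 2 with hs_def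
  have hs2 : s ^ 2 = 2 := Real.sq_sqrt (by norm_num)
  have hs0 : 0 ≤ s := Real.sqrt_nonneg 2
  have hs1 : 1 ≤ s := by nlinarith
  have he1 : (1:ℝ) ≤ Real.exp 1 := by linarith [Real.add_one_le_exp 1]
  rw [inner_eq]
  set T := ∫ z in Ioi y, Real.exp (-(z - s)^2/2) with hT_def
  have hT0 : 0 ≤ T := gauss_tail_nonneg y s
  by_cases hcase : y ≤ s + 1
  · -- small y
    have hT3 : T ≤ 3 := gauss_tail_le y s
    have hG : Real.exp (-1) ≤ Real.exp (-(y - s)^2/2) := by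
      rw [Real.exp_le_exp]; nlinarith
    have h1 : y * (Real.exp 1 * T) ≤ (s+1) * (Real.exp 1 * 3) := by
      apply mul_le_mul (by linarith) (by nlinarith) (by positivity) (by linarith)
    have h2 : (s+1) * (Real.exp 1 * 3) ≤ K0 * Real.exp (-(y - s)^2/2) := by
      have hK : K0 * Real.exp (-(y-s)^2/2) ≥ K0 * Real.exp (-1) :=
        mul_le_mul_of_nonneg_left hG (by unfold K0; positivity)
      have hee : Real.exp 1 * Real.exp (-1) = 1 := by
        rw [← Real.exp_add]; norm_num
      have heq : K0 * Real.exp (-1) = 3 * (1+s) * Real.exp 1 := by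
        unfold K0; rw [← hs_def]; linear_combination (3*(1+s)*Real.exp 1) * hee
      nlinarith [hK, heq, Real.exp_nonneg (-(y-s)^2/2)]
    linarith
  · -- large y
    push_neg at hcase
    have ha : 1 ≤ y - s := by linarith
    have ha0 : 0 < y - s := by linarith
    have hT' : T ≤ Real.exp (-(y - s)^2/2) / (y - s) := gauss_tail_decay (by linarith)
    have hTa : (y - s) * T ≤ Real.exp (-(y - s)^2/2) := by
      rw [← le_div_iff₀' ha0]; exact hT'
    set E := Real.exp (-(y - s)^2/2) with hE_def
    have hE0 : 0 ≤ E := Real.exp_nonneg _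
    -- y * (e * T) ≤ (1+s) * e * E ≤ K0 * E
    have hTE : T ≤ E := by nlinarith [mul_nonneg (by linarith : (0:ℝ) ≤ y - s - 1) hT0]
    have hyT : y * T ≤ (1 + s) * E := by
      nlinarith [mul_le_mul_of_nonneg_left hTE hs0]
    have : y * (Real.exp 1 * T) = Real.exp 1 * (y * T) := by ring
    rw [this]
    calc Real.exp 1 * (y * T) ≤ Real.exp 1 * ((1+s) * E) := by
          apply mul_le_mul_of_nonneg_left hyT (by positivity)
      _ ≤ K0 * E := by
          unfold K0; rw [← hs_def]
          have hpos : 0 ≤ Real.exp 1 * ((1+s)*E) := by positivity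
          calc Real.exp 1 * ((1+s)*E) ≤ (3*Real.exp 1) * (Real.exp 1 * ((1+s)*E)) :=
                le_mul_of_one_le_left hpos (by linarith)
            _ = 3*(1+s)*Real.exp 1*Real.exp 1*E := by ring
  
/-- the exponent algebra -/
lemma exp_alg {t k x y s : ℝ} (hs2 : s^2 = 2) (hs0 : 0 ≤ s) (ht : 2 ≤ t) (hk : 1 ≤ k)
    (hkt : k ≤ t - 1) (hx : 1 ≤ x) (hxt : x < t) :
    -(x^2*(t-k))/(2*k*t) + (x*y/k - y^2/(2*k)) + (-(y-s)^2/2)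
      ≤ s + -((y - (x+s*k)/(k+1))^2/2) := by
  have hk0 : (0:ℝ) < k := by linarith
  have ht0 : (0:ℝ) < t := by linarith
  have hk1 : (0:ℝ) < k + 1 := by linarith
  set m := (x + s*k)/(k+1) with hm_def
  have h1 : -(x^2*(t-k))/(2*k*t) + (x*y/k - y^2/(2*k)) = x^2/(2*t) - (y-x)^2/(2*k) := by
    field_simp
    ring
  have h2 : (y-x)^2/(2*k) + (y-s)^2/2 = (x-s)^2/(2*(k+1)) + ((k+1)/(2*k))*(y-m)^2 := by
    rw [hm_def]
    field_simp
    ring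
  have h3 : (x-s)^2/(2*t) ≤ (x-s)^2/(2*(k+1)) :=
    div_le_div_of_nonneg_left (sq_nonneg _) (by linarith) (by linarith)
  have h4 : x^2/(2*t) - (x-s)^2/(2*t) ≤ s := by
    rw [div_sub_div_same, div_le_iff₀ (by linarith : (0:ℝ) < 2*t)]
    nlinarith [mul_nonneg hs0 (sub_nonneg.2 hxt.le)]
  have h5 : (y-m)^2/2 ≤ ((k+1)/(2*k))*(y-m)^2 := by
    have hc : (1:ℝ)/2 ≤ (k+1)/(2*k) := by
      rw [div_le_div_iff₀ (by norm_num) (by linarith)]; linarith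
    nlinarith [sq_nonneg (y-m)]
  linarith

theorem stmt_7 :
    ∃ C : ℝ, 0 < C ∧ ∀ t k x : ℝ, 2 ≤ t → 1 ≤ k → k ≤ t - 1 → 1 ≤ x → x < t →
      Real.exp (-(x ^ 2 * (t - k)) / (2 * k * t)) *
        ∫ y in Set.Ioi (0 : ℝ),
          y * Real.exp (x * y / k - y ^ 2 / (2 * k)) *
            (∫ z in Set.Ioi y, Real.exp (Real.sqrt 2 * z - z ^ 2 / 2)) ≤ C := by
  refine ⟨K0 * Real.exp (Real.sqrt 2) * 3, by unfold K0; positivity, ?_⟩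
  intro t k x ht hk hkt hx hxt
  set s := Real.sqrt 2 with hs_def
  have hs2 : s ^ 2 = 2 := Real.sq_sqrt (by norm_num)
  have hs0 : 0 ≤ s := Real.sqrt_nonneg 2
  set m := (x + s*k)/(k+1) with hm_def
  have hK0 : 0 < K0 := by unfold K0; positivity
  rw [← integral_const_mul]
  have hgi : IntegrableOn (fun y : ℝ => K0 * Real.exp s * Real.exp (-(y-m)^2/2)) (Ioi 0) :=
    ((gauss_integrable m).const_mul _).integrableOn
  have hle : ∀ y ∈ Ioi (0:ℝ),
      Real.exp (-(x ^ 2 * (t - k)) / (2 * k * t)) *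
        (y * Real.exp (x * y / k - y ^ 2 / (2 * k)) *
          (∫ z in Set.Ioi y, Real.exp (s * z - z ^ 2 / 2)))
        ≤ K0 * Real.exp s * Real.exp (-(y-m)^2/2) := by
    intro y hy
    have hy0 : 0 < y := hy
    have hkey := key_bound hy0
    rw [← hs_def] at hkey
    have hAB : 0 ≤ Real.exp (-(x ^ 2 * (t - k)) / (2 * k * t)) *
        Real.exp (x * y / k - y ^ 2 / (2 * k)) := by positivity
    calc Real.exp (-(x ^ 2 * (t - k)) / (2 * k * t)) *
          (y * Real.exp (x * y / k - y ^ 2 / (2 * k)) *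
            (∫ z in Set.Ioi y, Real.exp (s * z - z ^ 2 / 2)))
        = (Real.exp (-(x ^ 2 * (t - k)) / (2 * k * t)) *
            Real.exp (x * y / k - y ^ 2 / (2 * k))) *
          (y * (∫ z in Set.Ioi y, Real.exp (s * z - z ^ 2 / 2))) := by ring
      _ ≤ (Real.exp (-(x ^ 2 * (t - k)) / (2 * k * t)) *
            Real.exp (x * y / k - y ^ 2 / (2 * k))) *
          (K0 * Real.exp (-(y - s)^2/2)) := mul_le_mul_of_nonneg_left hkey hAB
      _ = K0 * Real.exp (-(x ^ 2 * (t - k)) / (2 * k * t) + (x * y / k - y ^ 2 / (2 * k))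
            + (-(y - s)^2/2)) := by rw [Real.exp_add, Real.exp_add]; ring
      _ ≤ K0 * Real.exp (s + -((y - m)^2/2)) := by
          apply mul_le_mul_of_nonneg_left _ hK0.le
          rw [Real.exp_le_exp]
          have := exp_alg (t := t) (k := k) (x := x) (y := y) hs2 hs0 ht hk hkt hx hxt
          rw [← hm_def] at this
          convert this using 2 <;> ring
      _ = K0 * Real.exp s * Real.exp (-(y-m)^2/2) := by
          rw [Real.exp_add]; ring
  calc (∫ y in Set.Ioi (0:ℝ), Real.exp (-(x ^ 2 * (t - k)) / (2 * k * t)) *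
          (y * Real.exp (x * y / k - y ^ 2 / (2 * k)) *
            (∫ z in Set.Ioi y, Real.exp (s * z - z ^ 2 / 2))))
      ≤ ∫ y in Set.Ioi (0:ℝ), K0 * Real.exp s * Real.exp (-(y-m)^2/2) := by
        apply integral_mono_of_nonneg _ hgi
        · filter_upwards [self_mem_ae_restrict (measurableSet_Ioi : MeasurableSet (Ioi (0:ℝ)))]
            with y hy
          exact hle y hy
        · filter_upwards [self_mem_ae_restrict (measurableSet_Ioi : MeasurableSet (Ioi (0:ℝ)))]
            with y hy
          have hy0 : 0 < y := hy
          have hinner : 0 ≤ ∫ z in Set.Ioi y, Real.exp (s * z - z ^ 2 / 2) :=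
            setIntegral_nonneg measurableSet_Ioi fun z _ => Real.exp_nonneg _
          positivity
    _ = K0 * Real.exp s * ∫ y in Set.Ioi (0:ℝ), Real.exp (-(y-m)^2/2) := integral_const_mul _ _
    _ ≤ K0 * Real.exp s * 3 := by
        apply mul_le_mul_of_nonneg_left _ (by positivity)
        exact le_trans (setIntegral_le_integral (gauss_integrable m)
          (Filter.Eventually.of_forall fun z => Real.exp_nonneg _)) (gauss_integral_le m)
end
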